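/- arXiv:1905.11197 — 2 statements merged into one kernel-verified Lean document; each statement's English description precedes it below -/
import Mathlib

section
/- Assume there are ρ_0 ∈ ℝ, C ≥ 0, k ∈ ℕ such that {z : Re z ≥ ρ_0} ⊆ ρ(E,A) and ‖(zE+A)^{-1}‖ ≤ C|z|^k on this half-plane. Then the closures of the Wong sequence stabilize: closure(IV_k) = closure(IV_{k+1}) for all k > ind(E,A), where ind(E,A) is the minimal such k. -/
open Set Filter Topology MeasureTheory

variable {X Y : Type*} [NormedAddCommGroup X] [NormedSpace ℂ X]
  [NormedAddCommGroup Y] [NormedSpace ℂ Y]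

/-- The Wong sequence associated with `(E, A)`: `IV 0 = dom A`, `IV (k+1) = A⁻¹[E[IV k]]`. -/
def WongSeq (E : X →L[ℂ] Y) (A : X →ₗ.[ℂ] Y) : ℕ → Set X
  | 0 => (A.domain : Set X)
  | k + 1 => {x | ∃ hx : x ∈ A.domain, A ⟨x, hx⟩ ∈ E '' WongSeq E A k}

/-- `R` is the bounded inverse of `z E + A`. -/
def IsResolventAt (E : X →L[ℂ] Y) (A : X →ₗ.[ℂ] Y) (z : ℂ) (R : Y →L[ℂ] X) : Prop :=
  (∀ y : Y, ∃ h : R y ∈ A.domain, z • E (R y) + A ⟨R y, h⟩ = y) ∧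
  ∀ x, ∀ hx : x ∈ A.domain, R (z • E x + A ⟨x, hx⟩) = x

/-- The resolvent set `ρ(E,A)`. -/
def ResolventSet (E : X →L[ℂ] Y) (A : X →ₗ.[ℂ] Y) : Set ℂ :=
  {z | ∃ R : Y →L[ℂ] X, IsResolventAt E A z R}

/-- Mild solution of `(Eu)' + Au = 0`, `u 0 = u₀`. -/
def IsMildSolution (E : X →L[ℂ] Y) (A : X →ₗ.[ℂ] Y) (u₀ : X) (u : ℝ → X) : Prop :=
  ContinuousOn u (Set.Ici 0) ∧ u 0 = u₀ ∧
  ∀ t : ℝ, 0 < t → ∃ h : (∫ s in (0:ℝ)..t, u s) ∈ A.domain,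
    E (u t) + A ⟨∫ s in (0:ℝ)..t, u s, h⟩ = E u₀

/-- Classical solution of `(Eu)' + Au = 0`, `u 0 = u₀`. -/
def IsClassicalSolution (E : X →L[ℂ] Y) (A : X →ₗ.[ℂ] Y) (u₀ : X) (u : ℝ → X) : Prop :=
  ∃ u' : ℝ → X, ContinuousOn u' (Set.Ici 0) ∧
    (∀ t ∈ Set.Ici (0:ℝ), HasDerivWithinAt u (u' t) (Set.Ici 0) t) ∧
    u 0 = u₀ ∧
    ∀ t ∈ Set.Ici (0:ℝ), ∃ h : u t ∈ A.domain, E (u' t) + A ⟨u t, h⟩ = 0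

/-- The pencil `(E,A)` has a polynomially bounded resolvent of order `k`
on the half plane `Re z ≥ ρ₀`. -/
def PolyBoundOrder (E : X →L[ℂ] Y) (A : X →ₗ.[ℂ] Y) (ρ₀ : ℝ) (k : ℕ) : Prop :=
  ∃ C : ℝ, 0 ≤ C ∧ ∀ z : ℂ, ρ₀ ≤ z.re →
    ∃ R : Y →L[ℂ] X, IsResolventAt E A z R ∧ ‖R‖ ≤ C * ‖z‖ ^ k



section WongAux

variable (E : X →L[ℂ] Y) (A : X →ₗ.[ℂ] Y)

lemma wongSeq_mem_domain : ∀ {k : ℕ} {x : X}, x ∈ WongSeq E A k → x ∈ A.domain := by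
  intro k x hx
  cases k with
  | zero => exact hx
  | succ k => obtain ⟨h, _⟩ := hx; exact h

lemma wongSeq_succ_subset : ∀ k, WongSeq E A (k + 1) ⊆ WongSeq E A k := by
  intro k
  induction k with
  | zero => intro x hx; obtain ⟨h, _⟩ := hx; exact h
  | succ k ih =>
    rintro x ⟨hx, y, hy, hEy⟩
    exact ⟨hx, y, ih hy, hEy⟩

lemma wongSeq_smul_mem : ∀ k (c : ℂ) (x : X), x ∈ WongSeq E A k → c • x ∈ WongSeq E A k := by
  intro k
  induction k with
  | zero => intro c x hx; exact A.domain.smul_mem c hx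
  | succ k ih =>
    rintro c x ⟨hx, y, hy, hEy⟩
    refine ⟨A.domain.smul_mem c hx, c • y, ih c y hy, ?_⟩
    have h1 : (⟨c • x, A.domain.smul_mem c hx⟩ : A.domain) = c • (⟨x, hx⟩ : A.domain) := rfl
    rw [_root_.map_smul, hEy, h1, A.map_smul]

lemma wongSeq_sub_mem : ∀ k (x y : X), x ∈ WongSeq E A k → y ∈ WongSeq E A k →
    x - y ∈ WongSeq E A k := by
  intro k
  induction k with
  | zero => intro x y hx hy; exact A.domain.sub_mem hx hy
  | succ k ih =>
    rintro x y ⟨hx, x', hx', hEx'⟩ ⟨hy, y', hy', hEy'⟩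
    refine ⟨A.domain.sub_mem hx hy, x' - y', ih x' y' hx' hy', ?_⟩
    have h1 : (⟨x - y, A.domain.sub_mem hx hy⟩ : A.domain)
        = (⟨x, hx⟩ : A.domain) - ⟨y, hy⟩ := rfl
    rw [map_sub, hEx', hEy', h1, A.map_sub]

lemma wongSeq_chain : ∀ (k : ℕ) (x : X), x ∈ WongSeq E A k →
    ∃ c : ℕ → X, c 0 = x ∧ (∀ j, c j ∈ A.domain) ∧
      ∀ j < k, ∃ h : c j ∈ A.domain, A ⟨c j, h⟩ = E (c (j + 1)) := by
  intro k
  induction k with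
  | zero =>
    intro x hx
    refine ⟨fun j => Nat.casesOn j x (fun _ => 0), rfl, ?_, ?_⟩
    · intro j; cases j with
      | zero => exact hx
      | succ j => exact A.domain.zero_mem
    · intro j hj; omega
  | succ k ih =>
    rintro x ⟨hx, y, hy, hEy⟩
    obtain ⟨c', hc'0, hc'dom, hc'chain⟩ := ih y hy
    refine ⟨fun j => Nat.casesOn j x (fun j => c' j), rfl, ?_, ?_⟩
    · intro j; cases j with
      | zero => exact hx
      | succ j => exact hc'dom j
    · intro j hj
      cases j with
      | zero =>
        refine ⟨hx, ?_⟩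
        show A ⟨x, hx⟩ = E (c' 0)
        rw [hc'0, ← hEy]
      | succ j =>
        exact hc'chain j (by omega)

lemma resolvent_eq (z : ℂ) (R : Y →L[ℂ] X) (hR : IsResolventAt E A z R)
    (x : X) (hx : x ∈ A.domain) :
    z • R (E x) + R (A ⟨x, hx⟩) = x := by
  have h := hR.2 x hx
  rwa [map_add, _root_.map_smul] at h

lemma resolvent_maps_wong (z : ℂ) (R : Y →L[ℂ] X) (hR : IsResolventAt E A z R) :
    ∀ (k : ℕ) (x : X), x ∈ WongSeq E A k → R (E x) ∈ WongSeq E A (k + 1) := by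
  intro k
  induction k with
  | zero =>
    intro x hx
    obtain ⟨hmem, heq⟩ := hR.1 (E x)
    refine ⟨hmem, x - z • R (E x), A.domain.sub_mem hx (A.domain.smul_mem _ hmem), ?_⟩
    rw [map_sub, _root_.map_smul]
    exact (eq_sub_of_add_eq' heq).symm
  | succ k ih =>
    intro x hx
    have hxk : x ∈ WongSeq E A k := wongSeq_succ_subset E A k hx
    have hRE : R (E x) ∈ WongSeq E A (k + 1) := ih x hxk
    obtain ⟨hmem, heq⟩ := hR.1 (E x)
    refine ⟨hmem, x - z • R (E x),
      wongSeq_sub_mem E A (k + 1) _ _ hx (wongSeq_smul_mem E A (k + 1) z _ hRE), ?_⟩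
    rw [map_sub, _root_.map_smul]
    exact (eq_sub_of_add_eq' heq).symm

lemma wong_error_bound (k : ℕ) (z : ℂ) (R : Y →L[ℂ] X) (hR : IsResolventAt E A z R)
    (hz : 1 ≤ ‖z‖) (c : ℕ → X) (hdom : ∀ j, c j ∈ A.domain)
    (hchain : ∀ j < k, ∃ h : c j ∈ A.domain, A ⟨c j, h⟩ = E (c (j + 1)))
    (M : ℝ) (hM : ∀ j, j ≤ k → ‖c j‖ ≤ M) :
    ∀ m, m ≤ k → ‖R (A ⟨c 0, hdom 0⟩)‖ ≤
      (m : ℝ) * (M / ‖z‖) + ‖R (A ⟨c m, hdom m⟩)‖ / ‖z‖ ^ m := by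
  have ht : (0:ℝ) < ‖z‖ := lt_of_lt_of_le one_pos hz
  have hM0 : 0 ≤ M := le_trans (norm_nonneg _) (hM 0 (Nat.zero_le k))
  intro m
  induction m with
  | zero => intro _; simp
  | succ m ihm =>
    intro hmk
    have hm : m ≤ k := le_trans (Nat.le_succ m) hmk
    have ihm' := ihm hm
    obtain ⟨h, heq⟩ := hchain m (Nat.lt_of_succ_le hmk)
    have hAcm : A ⟨c m, hdom m⟩ = E (c (m + 1)) := heq
    have hid := resolvent_eq E A z R hR (c (m + 1)) (hdom (m + 1))
    have hz1 : z • R (A ⟨c m, hdom m⟩)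
        = c (m + 1) - R (A ⟨c (m + 1), hdom (m + 1)⟩) := by
      rw [hAcm]
      exact eq_sub_of_add_eq hid
    have h1 : ‖z‖ * ‖R (A ⟨c m, hdom m⟩)‖
        ≤ M + ‖R (A ⟨c (m + 1), hdom (m + 1)⟩)‖ := by
      rw [← norm_smul, hz1]
      refine le_trans (norm_sub_le _ _) ?_
      exact add_le_add (hM (m + 1) hmk) le_rfl
    have htm : (1:ℝ) ≤ ‖z‖ ^ m := one_le_pow₀ hz
    have htm0 : (0:ℝ) < ‖z‖ ^ m := lt_of_lt_of_le one_pos htm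
    have h2 : ‖R (A ⟨c m, hdom m⟩)‖
        ≤ (M + ‖R (A ⟨c (m + 1), hdom (m + 1)⟩)‖) / ‖z‖ := by
      rw [le_div_iff₀ ht]
      linarith [h1]
    set r : ℝ := ‖R (A ⟨c (m + 1), hdom (m + 1)⟩)‖ with hrdef
    have hr0 : 0 ≤ r := norm_nonneg _
    calc ‖R (A ⟨c 0, hdom 0⟩)‖
        ≤ (m : ℝ) * (M / ‖z‖) + ‖R (A ⟨c m, hdom m⟩)‖ / ‖z‖ ^ m := ihm'
      _ ≤ (m : ℝ) * (M / ‖z‖) + ((M + r) / ‖z‖) / ‖z‖ ^ m := by gcongr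
      _ = (m : ℝ) * (M / ‖z‖) + (M / (‖z‖ * ‖z‖ ^ m) + r / (‖z‖ * ‖z‖ ^ m)) := by
          rw [div_div, add_div]
      _ ≤ (m : ℝ) * (M / ‖z‖) + (M / ‖z‖ + r / (‖z‖ * ‖z‖ ^ m)) := by
          gcongr
          exact le_mul_of_one_le_right (le_of_lt ht) htm
      _ = ((m : ℝ) + 1) * (M / ‖z‖) + r / ‖z‖ ^ (m + 1) := by
          rw [pow_succ]; ring
      _ = ((m + 1 : ℕ) : ℝ) * (M / ‖z‖) + r / ‖z‖ ^ (m + 1) := by push_cast; ring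

end WongAux

/-- under a polynomially bounded resolvent of minimal order `n = ind(E,A)`,
the closures of the Wong sequence stabilise: `closure (IV k) = closure (IV (k+1))`
for every `k > ind(E,A)`. -/
theorem closure_wongSeq_stabilises (E : X →L[ℂ] Y) (A : X →ₗ.[ℂ] Y)
    (hdense : Dense (A.domain : Set X)) (hclosed : IsClosed (A.graph : Set (X × Y)))
    (ρ₀ : ℝ) (n : ℕ) (hn : PolyBoundOrder E A ρ₀ n)
    (hmin : ∀ m : ℕ, PolyBoundOrder E A ρ₀ m → n ≤ m) :
    ∀ k : ℕ, n < k → closure (WongSeq E A k) = closure (WongSeq E A (k + 1)) := by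
  obtain ⟨C, hC, hres⟩ := hn
  intro k hk
  refine Set.Subset.antisymm ?_ (closure_mono (wongSeq_succ_subset E A k))
  refine closure_minimal ?_ isClosed_closure
  intro x hx
  obtain ⟨c, hc0, hdom, hchain⟩ := wongSeq_chain E A k x hx
  subst hc0
  rw [Metric.mem_closure_iff]
  intro ε hε
  set M : ℝ := ∑ j ∈ Finset.range (k + 1), ‖c j‖ with hMdef
  have hM : ∀ j, j ≤ k → ‖c j‖ ≤ M := fun j hj =>
    Finset.single_le_sum (f := fun i => ‖c i‖) (fun i _ => norm_nonneg _)
      (Finset.mem_range.mpr (Nat.lt_succ_of_le hj))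
  have hM0 : 0 ≤ M := le_trans (norm_nonneg _) (hM 0 (Nat.zero_le k))
  set D : ℝ := (k : ℝ) * M + C * ‖A ⟨c k, hdom k⟩‖ with hDdef
  have hD0 : 0 ≤ D := by positivity
  set s : ℝ := max (max 1 ρ₀) (D / ε + 1) with hsdef
  have hs1 : (1:ℝ) ≤ s := le_trans (le_max_left 1 ρ₀) (le_max_left _ _)
  have hsρ : ρ₀ ≤ s := le_trans (le_max_right 1 ρ₀) (le_max_left _ _)
  have hs0 : (0:ℝ) < s := lt_of_lt_of_le one_pos hs1
  have hsD : D / s < ε := by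
    rw [div_lt_iff₀ hs0]
    have h1 : D / ε + 1 ≤ s := le_max_right _ _
    have h2 : ε * (D / ε + 1) = D + ε := by field_simp
    nlinarith [mul_le_mul_of_nonneg_left h1 (le_of_lt hε)]
  obtain ⟨R, hR, hRnorm⟩ := hres (s : ℂ) (by simpa using hsρ)
  have hzn : ‖(s : ℂ)‖ = s := by
    rw [Complex.norm_real, Real.norm_eq_abs, abs_of_pos hs0]
  have hz1 : 1 ≤ ‖(s : ℂ)‖ := by rw [hzn]; exact hs1
  have hbound := wong_error_bound E A k (s : ℂ) R hR hz1 c hdom hchain M hM k le_rfl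
  rw [hzn] at hbound hRnorm
  have htail : ‖R (A ⟨c k, hdom k⟩)‖ ≤ C * s ^ n * ‖A ⟨c k, hdom k⟩‖ := by
    refine le_trans (R.le_opNorm _) ?_
    exact mul_le_mul_of_nonneg_right hRnorm (norm_nonneg _)
  refine ⟨(s : ℂ) • R (E (c 0)), ?_, ?_⟩
  · exact wongSeq_smul_mem E A (k + 1) _ _ (resolvent_maps_wong E A (s : ℂ) R hR k (c 0) hx)
  · rw [dist_eq_norm]
    have hsub : c 0 - (s : ℂ) • R (E (c 0)) = R (A ⟨c 0, hdom 0⟩) :=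
      (eq_sub_of_add_eq' (resolvent_eq E A (s : ℂ) R hR (c 0) (hdom 0))).symm
    rw [hsub]
    have hpow2 : s ^ (n + 1) ≤ s ^ k := pow_le_pow_right₀ hs1 hk
    have hpow : C * s ^ n * ‖A ⟨c k, hdom k⟩‖ / s ^ k ≤ C * ‖A ⟨c k, hdom k⟩‖ / s := by
      rw [div_le_div_iff₀ (by positivity) hs0]
      have : C * s ^ n * ‖A ⟨c k, hdom k⟩‖ * s = C * ‖A ⟨c k, hdom k⟩‖ * s ^ (n + 1) := by
        rw [pow_succ]; ring
      rw [this]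
      exact mul_le_mul_of_nonneg_left hpow2 (by positivity)
    calc ‖R (A ⟨c 0, hdom 0⟩)‖
        ≤ (k : ℝ) * (M / s) + ‖R (A ⟨c k, hdom k⟩)‖ / s ^ k := hbound
      _ ≤ (k : ℝ) * (M / s) + C * s ^ n * ‖A ⟨c k, hdom k⟩‖ / s ^ k := by gcongr
      _ ≤ (k : ℝ) * (M / s) + C * ‖A ⟨c k, hdom k⟩‖ / s := by gcongr
      _ = D / s := by rw [hDdef]; ring
      _ < ε := hsD
end

section
/- One always has IV_{ind(E,A)+2} ⊆ V ⊆ closure(IV_{ind(E,A)+2}) = closure(IV_{ind(E,A)+1}), where V := A^{-1}[E[closure(IV_{ind(E,A)+1})]]. -/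
open Set Filter Topology MeasureTheory

variable {X Y : Type*} [NormedAddCommGroup X] [NormedSpace ℂ X]
  [NormedAddCommGroup Y] [NormedSpace ℂ Y]

section WongAux

variable {E : X →L[ℂ] Y} {A : X →ₗ.[ℂ] Y}

lemma wong_subset_domain (k : ℕ) : WongSeq E A k ⊆ (A.domain : Set X) := by
  cases k with
  | zero => exact fun x hx => hx
  | succ k => exact fun x hx => hx.1

lemma wong_closed_ops (k : ℕ) :
    ((0:X) ∈ WongSeq E A k) ∧
    (∀ x y, x ∈ WongSeq E A k → y ∈ WongSeq E A k → x + y ∈ WongSeq E A k) ∧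
    (∀ (c : ℂ) x, x ∈ WongSeq E A k → c • x ∈ WongSeq E A k) := by
  induction k with
  | zero => exact ⟨A.domain.zero_mem, fun x y hx hy => A.domain.add_mem hx hy,
      fun c x hx => A.domain.smul_mem c hx⟩
  | succ k ih =>
    obtain ⟨ih0, ihadd, ihsmul⟩ := ih
    refine ⟨⟨A.domain.zero_mem, 0, ih0, ?_⟩, ?_, ?_⟩
    · have : (⟨0, A.domain.zero_mem⟩ : A.domain) = 0 := rfl
      rw [this, A.map_zero, map_zero]
    · rintro x y ⟨hx, u, hu, hux⟩ ⟨hy, v, hv, hvy⟩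
      refine ⟨A.domain.add_mem hx hy, u + v, ihadd u v hu hv, ?_⟩
      have h1 : (⟨x + y, A.domain.add_mem hx hy⟩ : A.domain) = ⟨x, hx⟩ + ⟨y, hy⟩ := rfl
      rw [map_add, h1, A.map_add, hux, hvy]
    · rintro c x ⟨hx, u, hu, hux⟩
      refine ⟨A.domain.smul_mem c hx, c • u, ihsmul c u hu, ?_⟩
      have h1 : (⟨c • x, A.domain.smul_mem c hx⟩ : A.domain) = c • ⟨x, hx⟩ := rfl
      rw [_root_.map_smul, h1, A.map_smul, hux]

lemma wong_sub (k : ℕ) {x y : X} (hx : x ∈ WongSeq E A k) (hy : y ∈ WongSeq E A k) :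
    x - y ∈ WongSeq E A k := by
  have h := wong_closed_ops (E := E) (A := A) k
  have := h.2.1 x ((-1 : ℂ) • y) hx (h.2.2 (-1) y hy)
  simpa [sub_eq_add_neg] using this

lemma wong_antitone (k : ℕ) : WongSeq E A (k + 1) ⊆ WongSeq E A k := by
  induction k with
  | zero => exact fun x hx => hx.1
  | succ k ih =>
    rintro x ⟨hx, u, hu, hux⟩
    exact ⟨hx, u, ih hu, hux⟩

section Res
variable {z : ℂ} {R : Y →L[ℂ] X}

lemma res_mem (hR : IsResolventAt E A z R) (y : Y) : R y ∈ A.domain := (hR.1 y).1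

lemma res_apply (hR : IsResolventAt E A z R) (y : Y) (h : R y ∈ A.domain) :
    A ⟨R y, h⟩ = y - z • E (R y) := by
  obtain ⟨h', e⟩ := hR.1 y
  have h2 : A ⟨R y, h⟩ = A ⟨R y, h'⟩ := rfl
  rw [h2, eq_sub_iff_add_eq, add_comm]
  exact e

/-- `x = z • R (E x) + R (A x)` for `x` in the domain. -/
lemma res_split (hR : IsResolventAt E A z R) (x : X) (hx : x ∈ A.domain) :
    x = z • R (E x) + R (A ⟨x, hx⟩) := by
  have := hR.2 x hx
  rw [map_add, _root_.map_smul] at this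
  exact this.symm

/-- `R ∘ E` maps `IV k` into `IV (k+1)`. -/
lemma res_maps_wong (hR : IsResolventAt E A z R) :
    ∀ k, ∀ x ∈ WongSeq E A k, R (E x) ∈ WongSeq E A (k + 1) := by
  intro k
  induction k with
  | zero =>
    intro x hx
    refine ⟨res_mem hR (E x), x - z • R (E x), ?_, ?_⟩
    · exact wong_sub 0 hx ((wong_closed_ops 0).2.2 z _ (res_mem hR (E x)))
    · rw [res_apply hR (E x) (res_mem hR (E x)), map_sub, _root_.map_smul]
  | succ k ih =>
    intro x hx
    have hx' : x ∈ WongSeq E A k := wong_antitone k hx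
    have h1 : R (E x) ∈ WongSeq E A (k + 1) := ih x hx'
    refine ⟨res_mem hR (E x), x - z • R (E x), ?_, ?_⟩
    · exact wong_sub (k+1) hx ((wong_closed_ops (k+1)).2.2 z _ h1)
    · rw [res_apply hR (E x) (res_mem hR (E x)), map_sub, _root_.map_smul]

/-- Iterating `x ↦ z • R (E x)` lands in `IV k` after `k+1` steps. -/
lemma res_iter_mem (hR : IsResolventAt E A z R) (k : ℕ) (x : X) :
    (fun w => z • R (E w))^[k + 1] x ∈ WongSeq E A k := by
  induction k with
  | zero =>
    exact A.domain.smul_mem z (res_mem hR (E x))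
  | succ k ih =>
    rw [Function.iterate_succ_apply']
    exact (wong_closed_ops (k+1)).2.2 z _ (res_maps_wong hR k _ ih)

end Res

private lemma decay_step {t a b c : ℝ} (ht1 : 1 ≤ t) (hb : 0 ≤ b) (hc : 0 ≤ c) {e f : ℤ}
    (hf : f ≤ e + 1) (he : 0 ≤ e + 1) (h : t * a ≤ b + c * t ^ f) :
    a ≤ (b + c) * t ^ e := by
  have ht0 : (0:ℝ) < t := lt_of_lt_of_le one_pos ht1
  have h3 : t * a ≤ (b + c) * t ^ (e + 1) := by
    calc t * a ≤ b + c * t ^ f := h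
      _ ≤ b * t ^ (e+1) + c * t ^ (e+1) := by
          refine add_le_add ?_ (mul_le_mul_of_nonneg_left (zpow_le_zpow_right₀ ht1 hf) hc)
          nth_rewrite 1 [← mul_one b]
          exact mul_le_mul_of_nonneg_left (one_le_zpow₀ ht1 he) hb
      _ = (b + c) * t ^ (e + 1) := by ring
  have h2 : a * t ≤ ((b + c) * t ^ e) * t := by
    calc a * t = t * a := mul_comm _ _
      _ ≤ (b + c) * t ^ (e + 1) := h3
      _ = ((b + c) * t ^ e) * t := by rw [zpow_add_one₀ ht0.ne']; ring
  exact le_of_mul_le_mul_right h2 ht0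

/-- Quantitative decay of `R_t (E x)` for `x ∈ IV k`. -/
lemma res_decay {C : ℝ} (hC : 0 ≤ C) (ρ₀ : ℝ) (n : ℕ) :
    ∀ k, ∀ x ∈ WongSeq E A k, ∃ M : ℝ, 0 ≤ M ∧ ∀ t : ℝ, max ρ₀ 1 ≤ t →
      ∀ R : Y →L[ℂ] X, IsResolventAt E A (t : ℂ) R → ‖R‖ ≤ C * t ^ n →
      ‖R (E x)‖ ≤ M * t ^ (((n : ℤ) - 1 - k) ⊔ (-1)) := by
  have key : ∀ (t : ℝ), max ρ₀ 1 ≤ t → ∀ R : Y →L[ℂ] X, IsResolventAt E A (t:ℂ) R →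
      ∀ x, ∀ hx : x ∈ A.domain, t * ‖R (E x)‖ ≤ ‖x‖ + ‖R (A ⟨x, hx⟩)‖ := by
    intro t ht R hR x hx
    have ht1 : (1:ℝ) ≤ t := le_trans (le_max_right _ _) ht
    have hsplit := res_split hR x hx
    have heq : (t:ℂ) • R (E x) = x - R (A ⟨x, hx⟩) := by
      rw [eq_sub_iff_add_eq]; exact hsplit.symm
    have hnorm : ‖(t:ℂ) • R (E x)‖ = t * ‖R (E x)‖ := by
      rw [norm_smul, Complex.norm_real, Real.norm_eq_abs, abs_of_pos (by linarith)]
    calc t * ‖R (E x)‖ = ‖(t:ℂ) • R (E x)‖ := hnorm.symm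
      _ = ‖x - R (A ⟨x, hx⟩)‖ := by rw [heq]
      _ ≤ ‖x‖ + ‖R (A ⟨x, hx⟩)‖ := norm_sub_le _ _
  intro k
  induction k with
  | zero =>
    intro x hx
    refine ⟨‖x‖ + C * ‖A ⟨x, hx⟩‖, by positivity, ?_⟩
    intro t ht R hR hRb
    have ht1 : (1:ℝ) ≤ t := le_trans (le_max_right _ _) ht
    have h1 := key t ht R hR x hx
    have h2 : ‖R (A ⟨x, hx⟩)‖ ≤ (C * ‖A ⟨x, hx⟩‖) * t ^ (n:ℤ) := by
      rw [zpow_natCast]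
      calc ‖R (A ⟨x, hx⟩)‖ ≤ ‖R‖ * ‖A ⟨x, hx⟩‖ := R.le_opNorm _
        _ ≤ C * t ^ n * ‖A ⟨x, hx⟩‖ := mul_le_mul_of_nonneg_right hRb (norm_nonneg _)
        _ = C * ‖A ⟨x, hx⟩‖ * t ^ n := by ring
    refine decay_step ht1 (norm_nonneg _) (by positivity) ?_ ?_ (le_trans h1 (by linarith))
    · omega
    · omega
  | succ k ih =>
    intro x hx
    obtain ⟨hxd, y, hy, hEy⟩ := hx
    obtain ⟨M₁, hM₁0, hM₁⟩ := ih y hy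
    refine ⟨‖x‖ + M₁, by positivity, ?_⟩
    intro t ht R hR hRb
    have ht1 : (1:ℝ) ≤ t := le_trans (le_max_right _ _) ht
    have h1 := key t ht R hR x hxd
    rw [← hEy] at h1
    have h2 := hM₁ t ht R hR hRb
    refine decay_step ht1 (norm_nonneg _) hM₁0 ?_ ?_ (le_trans h1 (by linarith))
    · push_cast; omega
    · push_cast; omega

/-- The Wong sequence as a submodule. -/
def wongSM (E : X →L[ℂ] Y) (A : X →ₗ.[ℂ] Y) (k : ℕ) : Submodule ℂ X where
  carrier := WongSeq E A k
  add_mem' := fun ha hb => (wong_closed_ops k).2.1 _ _ ha hb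
  zero_mem' := (wong_closed_ops k).1
  smul_mem' := fun c x hx => (wong_closed_ops k).2.2 c x hx

lemma mem_cl_iff (k : ℕ) (x : X) :
    x ∈ closure (WongSeq E A k) ↔ x ∈ (wongSM E A k).topologicalClosure := by
  rw [← SetLike.mem_coe, Submodule.topologicalClosure_coe]; rfl

lemma cl_add {k : ℕ} {u v : X} (hu : u ∈ closure (WongSeq E A k))
    (hv : v ∈ closure (WongSeq E A k)) : u + v ∈ closure (WongSeq E A k) := by
  rw [mem_cl_iff] at *
  exact Submodule.add_mem _ hu hv

lemma cl_smul {k : ℕ} (c : ℂ) {u : X} (hu : u ∈ closure (WongSeq E A k)) :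
    c • u ∈ closure (WongSeq E A k) := by
  rw [mem_cl_iff] at *
  exact Submodule.smul_mem _ c hu

lemma V_subset_closure {z : ℂ} {R : Y →L[ℂ] X} (hR : IsResolventAt E A z R) (m : ℕ) :
    {x : X | ∃ hx : x ∈ A.domain, A ⟨x, hx⟩ ∈ E '' closure (WongSeq E A (m + 1))} ⊆
      closure (WongSeq E A (m + 2)) := by
  set T : X → X := fun w => z • R (E w) with hT
  set Vs : Set X := {x : X | ∃ hx : x ∈ A.domain, A ⟨x, hx⟩ ∈ E '' closure (WongSeq E A (m + 1))}
    with hVs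
  have claim1 : ∀ w ∈ Vs, (w - T w) ∈ closure (WongSeq E A (m + 2)) ∧ T w ∈ Vs := by
    rintro w ⟨hw, y, hy, hEy⟩
    have hREy : R (E y) ∈ closure (WongSeq E A (m + 2)) := by
      have hc : Continuous fun u : X => R (E u) := R.continuous.comp E.continuous
      have h1 : R (E y) ∈ closure ((fun u : X => R (E u)) '' WongSeq E A (m + 1)) :=
        image_closure_subset_closure_image hc ⟨y, hy, rfl⟩
      refine closure_mono ?_ h1
      rintro _ ⟨u, hu, rfl⟩
      exact res_maps_wong hR (m + 1) u hu
    have hsplit := res_split hR w hw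
    rw [← hEy] at hsplit
    have hwT : w - T w = R (E y) := sub_eq_iff_eq_add'.mpr hsplit
    refine ⟨by rw [hwT]; exact hREy, ?_⟩
    have hTd : T w ∈ A.domain := A.domain.smul_mem z (res_mem hR (E w))
    refine ⟨hTd, z • R (E y), ?_, ?_⟩
    · exact cl_smul z (closure_mono (wong_antitone (m + 1)) hREy)
    · have h3 : (⟨T w, hTd⟩ : A.domain) = z • ⟨R (E w), res_mem hR (E w)⟩ := rfl
      rw [h3, A.map_smul, res_apply hR (E w) (res_mem hR (E w)), _root_.map_smul]
      congr 1
      rw [← hwT]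
      simp [hT, map_sub, _root_.map_smul]
  have claim2 : ∀ j, ∀ w ∈ Vs, w - T^[j] w ∈ closure (WongSeq E A (m + 2)) ∧ T^[j] w ∈ Vs := by
    intro j
    induction j with
    | zero =>
      intro w hw
      refine ⟨?_, hw⟩
      simp only [Function.iterate_zero, id_eq, sub_self]
      exact subset_closure (wong_closed_ops (m + 2)).1
    | succ j ihj =>
      intro w hw
      obtain ⟨h1, h2⟩ := ihj w hw
      obtain ⟨h3, h4⟩ := claim1 _ h2
      rw [Function.iterate_succ_apply']
      refine ⟨?_, h4⟩
      have heq : w - T (T^[j] w) = (w - T^[j] w) + (T^[j] w - T (T^[j] w)) := by abel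
      rw [heq]
      exact cl_add h1 h3
  intro x hx
  obtain ⟨h1, _⟩ := claim2 (m + 3) x hx
  have h5 : T^[m + 3] x ∈ WongSeq E A (m + 2) := res_iter_mem hR (m + 2) x
  have heq : x = (x - T^[m + 3] x) + T^[m + 3] x := by abel
  rw [heq]
  exact cl_add h1 (subset_closure h5)

end WongAux

/-- IV (ind+2) is contained in V = A⁻¹[E[closure (IV (ind+1))]], which is
contained in closure (IV (ind+2)) = closure (IV (ind+1)). -/
theorem space_V_sandwich (E : X →L[ℂ] Y) (A : X →ₗ.[ℂ] Y)
    (hdense : Dense (A.domain : Set X)) (hclosed : IsClosed (A.graph : Set (X × Y)))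
    (ρ₀ : ℝ) (n : ℕ) (hn : PolyBoundOrder E A ρ₀ n)
    (hmin : ∀ m : ℕ, PolyBoundOrder E A ρ₀ m → n ≤ m)
    (V : Set X)
    (hV : V = {x : X | ∃ hx : x ∈ A.domain,
      A ⟨x, hx⟩ ∈ E '' closure (WongSeq E A (n + 1))}) :
    WongSeq E A (n + 2) ⊆ V ∧ V ⊆ closure (WongSeq E A (n + 2)) ∧
      closure (WongSeq E A (n + 2)) = closure (WongSeq E A (n + 1)) := by
  obtain ⟨C, hC, hres⟩ := hn
  -- a fixed resolvent at `t₀ = max ρ₀ 1`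
  set t₀ : ℝ := max ρ₀ 1 with ht₀
  have ht₀ρ : ρ₀ ≤ ((t₀ : ℂ)).re := by rw [Complex.ofReal_re]; exact le_max_left _ _
  obtain ⟨R₀, hR₀, _⟩ := hres (t₀ : ℂ) ht₀ρ
  -- `IV (n+1) ⊆ closure (IV (n+2))`
  have hkey : WongSeq E A (n + 1) ⊆ closure (WongSeq E A (n + 2)) := by
    intro x hx
    obtain ⟨hxd, y, hy, hEy⟩ := hx
    obtain ⟨M, hM0, hM⟩ := res_decay hC ρ₀ n n y hy
    rw [Metric.mem_closure_iff]
    intro ε hε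
    set t : ℝ := max (max ρ₀ 1) (M / ε + 1) with htdef
    have ht : max ρ₀ 1 ≤ t := le_max_left _ _
    have ht1 : (1 : ℝ) ≤ t := le_trans (le_max_right _ _) ht
    have ht0 : (0 : ℝ) < t := lt_of_lt_of_le one_pos ht1
    have htρ : ρ₀ ≤ ((t : ℂ)).re := by
      rw [Complex.ofReal_re]; exact le_trans (le_max_left _ _) ht
    obtain ⟨R, hR, hRb⟩ := hres (t : ℂ) htρ
    have hRb' : ‖R‖ ≤ C * t ^ n := by
      have : ‖(t : ℂ)‖ = t := by
        rw [Complex.norm_real, Real.norm_eq_abs, abs_of_pos ht0]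
      rwa [this] at hRb
    refine ⟨(t : ℂ) • R (E x), ?_, ?_⟩
    · exact (wong_closed_ops (n + 2)).2.2 _ _
        (res_maps_wong hR (n + 1) x ⟨hxd, y, hy, hEy⟩)
    · have hsplit := res_split hR x hxd
      rw [← hEy] at hsplit
      have hwT : x - (t : ℂ) • R (E x) = R (E y) := sub_eq_iff_eq_add'.mpr hsplit
      have hMy := hM t ht R hR hRb'
      have hexp : (((n : ℤ) - 1 - n) ⊔ (-1)) = -1 := by omega
      rw [hexp] at hMy
      have hbnd : ‖R (E y)‖ ≤ M / t := by
        rw [zpow_neg_one] at hMy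
        calc ‖R (E y)‖ ≤ M * t⁻¹ := hMy
          _ = M / t := by rw [div_eq_mul_inv]
      have hlt : M / t < ε := by
        rw [div_lt_iff₀ ht0]
        have h1 : M / ε + 1 ≤ t := le_max_right _ _
        have h2 : M / ε < t := by linarith
        calc M = (M / ε) * ε := by field_simp
          _ < t * ε := by exact mul_lt_mul_of_pos_right h2 hε
          _ = ε * t := mul_comm _ _
      rw [dist_eq_norm, hwT]
      exact lt_of_le_of_lt hbnd hlt
  -- closure equality
  have hcl : closure (WongSeq E A (n + 2)) = closure (WongSeq E A (n + 1)) := by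
    apply le_antisymm
    · exact closure_mono (wong_antitone (n + 1))
    · exact closure_minimal hkey isClosed_closure
  refine ⟨?_, ?_, hcl⟩
  · rintro x ⟨hx, u, hu, hEu⟩
    rw [hV]
    exact ⟨hx, u, subset_closure hu, hEu⟩
  · rw [hV]
    exact V_subset_closure hR₀ n
end
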